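/- Let n ≥ 2 and let f = (y₁² + y₁)(y₂² + y₂)⋯(y_{n−1}² + y_{n−1}) − z³(yₙ² + yₙ) ∈ ℂ[y₁,…,yₙ,z]. Then the quotient ring ℂ[y₁,…,yₙ,z]/(f) is an integral domain, and its field of fractions is isomorphic as a ℂ-algebra to the field ℂ(t₁,…,tₙ) of rational functions in n variables over ℂ (the fraction field of the polynomial ring in n variables). -/

import Mathlib

/-!
Write `f = A - B z³` with `A = ∏_{i < n} (yᵢ² + yᵢ)` and `B = yₙ² + yₙ`. As a polynomial in `z`
over `k[y]`, `f` is Eisenstein at the prime `y_{n-1}`, and it is primitive because `A` and `B` are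
products of pairwise coprime linear factors; so `f` is prime.

Put `α = yₙ / y_{n-1}` and divide the equation by `y_{n-1} ≠ 0`: this gives the linear equation
`y_{n-1} (A' - z³α²) = z³α - A'` with `A' = ∏_{i < n-1} (yᵢ² + yᵢ)`. Hence `y₁, …, y_{n-2}, z, α`
generate the fraction field. The `k`-algebra map `k[t] → Q[1/y_{n-1}]` they define is injective,
because composed with evaluation at the `k(t)`-point of `f = 0` obtained by solving the linear
equation it becomes the inclusion `k[t] ⊆ k(t)`.

Below, the indices `n - 1` and `n` are any two distinct `i₀` and `i₁`, and `tᵢ₀`, `tᵢ₁` stand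
for `z` and `α`.
-/

open MvPolynomial Finset

namespace Polynomial

theorem irreducible_C_sub_C_mul_X_pow {R : Type*} [CommRing R] [IsDomain R] {A B p : R} {n : ℕ}
    (hn : 0 < n) (hp : Prime p) (hpA : p ∣ A) (hpA2 : ¬p ^ 2 ∣ A) (hpB : ¬p ∣ B)
    (hAB : IsRelPrime A B) : Irreducible (C A - C B * X ^ n) := by
  have hB : B ≠ 0 := by rintro rfl; exact hpB (dvd_zero p)
  have hcoeff (j : ℕ) :
      (C A - C B * X ^ n).coeff j = if j = 0 then A else if j = n then -B else 0 := by
    rcases eq_or_ne j 0 with rfl | hj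
    · simp [coeff_C, coeff_X_pow, hn.ne]
    · simp only [coeff_sub, coeff_C, coeff_C_mul, coeff_X_pow, hj, if_false]
      split_ifs <;> simp
  have hdeg : (C A - C B * X ^ n).natDegree = n := by
    rw [sub_eq_add_neg, ← neg_mul, ← C_neg, add_comm, natDegree_add_C,
      natDegree_C_mul_X_pow _ _ (neg_ne_zero.mpr hB)]
  have hEisenstein : (C A - C B * X ^ n).IsEisensteinAt (Ideal.span {p}) := by
    refine ⟨?_, fun {j} hj => ?_, ?_⟩
    · rwa [leadingCoeff, hdeg, hcoeff, if_neg hn.ne', if_pos rfl, Ideal.mem_span_singleton,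
        dvd_neg]
    · rw [hdeg] at hj
      rw [hcoeff, if_neg hj.ne, Ideal.mem_span_singleton]
      split_ifs
      exacts [hpA, dvd_zero p]
    · rwa [hcoeff, if_pos rfl, Ideal.span_singleton_pow, Ideal.mem_span_singleton]
  refine hEisenstein.irreducible ((Ideal.span_singleton_prime hp.ne_zero).mpr hp)
    (fun r hr => ?_) (by rw [hdeg]; exact hn)
  rw [C_dvd_iff_dvd_coeff] at hr
  exact hAB (by simpa [hcoeff] using hr 0) (by simpa [hcoeff, hn.ne'] using hr n)

end Polynomial

namespace MvPolynomial

variable {k σ : Type*} [Field k]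

theorem prime_X_add_C (i : σ) (a : k) : Prime (X i + C a : MvPolynomial σ k) := by
  classical
  refine UniqueFactorizationMonoid.irreducible_iff_prime.mp
    (irreducible_of_totalDegree_eq_one ?_ fun r hr => isUnit_of_dvd_one ?_)
  · rw [totalDegree_add_eq_left_of_totalDegree_lt] <;> simp
  · simpa [coeff_C, (Finsupp.single_ne_zero.mpr one_ne_zero).symm] using hr (Finsupp.single i 1)

theorem X_add_C_not_dvd_X_add_C {i j : σ} (hij : i ≠ j) (a b : k) :
    ¬(X i + C a : MvPolynomial σ k) ∣ X j + C b := by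
  classical
  rintro ⟨q, hq⟩
  have := congrArg (eval fun l => if l = i then -a else 1 - b) hq
  simp [hij.symm] at this

theorem isRelPrime_X_add_C {i j : σ} (hij : i ≠ j) (a b : k) :
    IsRelPrime (X i + C a : MvPolynomial σ k) (X j + C b) :=
  (prime_X_add_C i a).irreducible.isRelPrime_iff_not_dvd.mpr (X_add_C_not_dvd_X_add_C hij a b)

end MvPolynomial

namespace Hypersurface

section SqAdd

variable {k σ : Type*} [Field k]

noncomputable def sqAdd (i : σ) : MvPolynomial σ k := X i ^ 2 + X i

theorem sqAdd_eq (i : σ) : (sqAdd i : MvPolynomial σ k) = (X i + C 0) * (X i + C 1) := by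
  rw [sqAdd, map_zero, map_one]; ring

theorem sqAdd_ne_zero (i : σ) : (sqAdd i : MvPolynomial σ k) ≠ 0 := by
  rw [sqAdd_eq]
  exact mul_ne_zero (prime_X_add_C i _).ne_zero (prime_X_add_C i _).ne_zero

theorem X_dvd_sqAdd (i : σ) : (X i : MvPolynomial σ k) ∣ sqAdd i :=
  ⟨X i + C 1, by rw [sqAdd_eq, map_zero, add_zero]⟩

theorem isRelPrime_sqAdd {i j : σ} (hij : i ≠ j) :
    IsRelPrime (sqAdd i : MvPolynomial σ k) (sqAdd j) := by
  rw [sqAdd_eq, sqAdd_eq]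
  exact .mul_left (.mul_right (isRelPrime_X_add_C hij _ _) (isRelPrime_X_add_C hij _ _))
    (.mul_right (isRelPrime_X_add_C hij _ _) (isRelPrime_X_add_C hij _ _))

theorem isRelPrime_prod_sqAdd {s : Finset σ} {j : σ} (hj : j ∉ s) :
    IsRelPrime (∏ i ∈ s, sqAdd i : MvPolynomial σ k) (sqAdd j) :=
  .prod_left fun _ hi => isRelPrime_sqAdd (ne_of_mem_of_not_mem hi hj)

theorem not_X_dvd_sqAdd {i j : σ} (hij : i ≠ j) : ¬(X i : MvPolynomial σ k) ∣ sqAdd j :=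
  fun h => (prime_X_add_C i (0 : k)).not_isUnit <| by
    simpa using isRelPrime_sqAdd hij (X_dvd_sqAdd i) h

end SqAdd

variable {k ι : Type*} [Field k] [Fintype ι] [DecidableEq ι]

noncomputable def hyperPoly (i₁ : ι) : MvPolynomial (Option ι) k :=
  ∏ i ∈ univ.erase i₁, sqAdd (some i) - X none ^ 3 * sqAdd (some i₁)

theorem optionEquivLeft_hyperPoly (i₁ : ι) :
    optionEquivLeft k ι (hyperPoly i₁) =
      Polynomial.C (∏ i ∈ univ.erase i₁, sqAdd i) - Polynomial.C (sqAdd i₁) * Polynomial.X ^ 3 := by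
  simp [hyperPoly, sqAdd, optionEquivLeft_X_some, optionEquivLeft_X_none, map_prod]
  ring

theorem prime_hyperPoly {i₀ i₁ : ι} (h : i₀ ≠ i₁) :
    Prime (hyperPoly i₁ : MvPolynomial (Option ι) k) := by
  have hi₀ : i₀ ∈ univ.erase i₁ := mem_erase.mpr ⟨h, mem_univ _⟩
  have hX : Prime (X i₀ : MvPolynomial ι k) := by simpa using prime_X_add_C i₀ (0 : k)
  refine (MulEquiv.prime_iff (optionEquivLeft k ι).toMulEquiv).mp ?_
  show Prime (optionEquivLeft k ι _)
  rw [optionEquivLeft_hyperPoly]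
  refine UniqueFactorizationMonoid.irreducible_iff_prime.mp
    (Polynomial.irreducible_C_sub_C_mul_X_pow three_pos hX
      ((X_dvd_sqAdd i₀).trans (dvd_prod_of_mem _ hi₀)) ?_ (not_X_dvd_sqAdd h)
      (isRelPrime_prod_sqAdd (notMem_erase i₁ univ)))
  rw [← mul_prod_erase _ _ hi₀, sqAdd_eq, map_zero, add_zero, pow_two, mul_assoc,
    mul_dvd_mul_iff_left hX.ne_zero]
  intro hdvd
  rcases hX.dvd_or_dvd hdvd with h₁ | h₂
  · exact hX.not_isUnit (isUnit_of_dvd_one (by simpa using (dvd_add_right dvd_rfl).mp h₁))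
  · exact hX.not_isUnit (isRelPrime_prod_sqAdd (notMem_erase i₀ _) h₂ (X_dvd_sqAdd i₀))

abbrev CoordRing (k : Type*) [Field k] (i₁ : ι) :=
  MvPolynomial (Option ι) k ⧸ Ideal.span {(hyperPoly i₁ : MvPolynomial (Option ι) k)}

instance (i₁ : ι) [Nontrivial ι] : IsDomain (CoordRing k i₁) := by
  obtain ⟨i₀, h⟩ := exists_ne i₁
  exact (Ideal.Quotient.isDomain_iff_prime _).mpr
    ((Ideal.span_singleton_prime (prime_hyperPoly (k := k) h).ne_zero).mpr (prime_hyperPoly h))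

noncomputable def restProd (i₀ i₁ : ι) : MvPolynomial ι k :=
  ∏ i ∈ (univ.erase i₁).erase i₀, sqAdd i

theorem restProd_ne_zero {i₀ i₁ : ι} : (restProd i₀ i₁ : MvPolynomial ι k) ≠ 0 :=
  prod_ne_zero_iff.mpr fun i _ => sqAdd_ne_zero i

theorem aeval_restProd {S : Type*} [CommRing S] [Algebra k S] {i₀ i₁ : ι} {v : ι → S}
    (φ : MvPolynomial ι k →ₐ[k] S) (hv : ∀ i, i ≠ i₀ → i ≠ i₁ → v i = φ (X i)) :
    aeval v (restProd i₀ i₁ : MvPolynomial ι k) = φ (restProd i₀ i₁) := by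
  simp only [restProd, map_prod]
  refine prod_congr rfl fun i hi => ?_
  rw [mem_erase, mem_erase] at hi
  simp [sqAdd, hv i hi.1 hi.2.1]

theorem aeval_hyperPoly {S : Type*} [CommRing S] [Algebra k S] {i₀ i₁ : ι} (h : i₀ ≠ i₁)
    (v : Option ι → S) :
    aeval v (hyperPoly i₁ : MvPolynomial (Option ι) k) =
      (v (some i₀) ^ 2 + v (some i₀)) * aeval (v ∘ some) (restProd i₀ i₁ : MvPolynomial ι k) -
        v none ^ 3 * (v (some i₁) ^ 2 + v (some i₁)) := by
  rw [hyperPoly, ← mul_prod_erase _ _ (mem_erase.mpr ⟨h, mem_univ i₀⟩)]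
  simp [sqAdd, restProd, map_prod]

section GenericPoint

variable {i₀ i₁ : ι}

local notation "T" => MvPolynomial ι k
local notation "K" => FractionRing (MvPolynomial ι k)
local notation "π" => Ideal.Quotient.mk (Ideal.span {(hyperPoly i₁ : MvPolynomial (Option ι) k)})
local notation "L" => Localization.Away (π (X (some i₀)))

noncomputable def numPoly (i₀ i₁ : ι) : T := X i₀ ^ 3 * X i₁ - restProd i₀ i₁

noncomputable def denPoly (i₀ i₁ : ι) : T := restProd i₀ i₁ - X i₀ ^ 3 * X i₁ ^ 2

theorem aeval_update_zero_restProd :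
    aeval (Function.update (X : ι → T) i₁ 0) (restProd i₀ i₁ : T) = restProd i₀ i₁ :=
  aeval_restProd (AlgHom.id k T) fun _ _ hi₁ => Function.update_of_ne hi₁ _ _

theorem numPoly_ne_zero : (numPoly i₀ i₁ : T) ≠ 0 := fun h0 => by
  have := congrArg (aeval (Function.update (X : ι → T) i₁ 0)) h0
  rw [numPoly, map_sub, map_mul, map_pow, aeval_X, aeval_X, Function.update_self,
    aeval_update_zero_restProd, map_zero, mul_zero, zero_sub, neg_eq_zero] at this
  exact restProd_ne_zero this

theorem denPoly_ne_zero : (denPoly i₀ i₁ : T) ≠ 0 := fun h0 => by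
  have := congrArg (aeval (Function.update (X : ι → T) i₁ 0)) h0
  rw [denPoly, map_sub, map_mul, map_pow, map_pow, aeval_X, aeval_X, Function.update_self,
    aeval_update_zero_restProd, zero_pow two_ne_zero, mul_zero, sub_zero, map_zero] at this
  exact restProd_ne_zero this

variable (k) in
/-- `yᵢ₀ = s`, `yᵢ₁ = tᵢ₁ s`, `z = tᵢ₀`, `yᵢ = tᵢ` with `s = numPoly / denPoly`: after the
substitution `yᵢ₁ = tᵢ₁ yᵢ₀`, the equation divided by `yᵢ₀` is linear in `yᵢ₀`, with root `s`. -/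
noncomputable def genericPoint (i₀ i₁ : ι) : Option ι → K :=
  let s : K := algebraMap T K (numPoly i₀ i₁) / algebraMap T K (denPoly i₀ i₁)
  fun o => o.elim (algebraMap T K (X i₀)) <| Function.update
    (Function.update (fun i => algebraMap T K (X i)) i₁ (algebraMap T K (X i₁) * s)) i₀ s

theorem aeval_genericPoint_hyperPoly (h : i₀ ≠ i₁) :
    aeval (genericPoint k i₀ i₁) (hyperPoly i₁ : MvPolynomial (Option ι) k) = 0 := by
  rw [aeval_hyperPoly h, aeval_restProd (IsScalarTower.toAlgHom k T K) fun i hi₀ hi₁ => by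
    simp [genericPoint, hi₀, hi₁]]
  simp only [genericPoint, Option.elim, Function.update_self, Function.update_of_ne h.symm,
    IsScalarTower.coe_toAlgHom']
  set s := algebraMap T K (numPoly i₀ i₁) / algebraMap T K (denPoly i₀ i₁)
  have hs : s * algebraMap T K (denPoly i₀ i₁) = algebraMap T K (numPoly i₀ i₁) :=
    div_mul_cancel₀ _ ((map_ne_zero_iff _ (IsFractionRing.injective T K)).mpr denPoly_ne_zero)
  simp only [numPoly, denPoly, map_sub, map_mul, map_pow] at hs
  linear_combination s * hs

noncomputable def evalGenericPoint (h : i₀ ≠ i₁) : CoordRing k i₁ →ₐ[k] K :=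
  Ideal.Quotient.liftₐ _ (aeval (genericPoint k i₀ i₁)) fun a ha => by
    obtain ⟨b, rfl⟩ := Ideal.mem_span_singleton'.mp ha
    rw [map_mul, aeval_genericPoint_hyperPoly h, mul_zero]

theorem evalGenericPoint_mk (h : i₀ ≠ i₁) (p : MvPolynomial (Option ι) k) :
    evalGenericPoint h (π p) = aeval (genericPoint k i₀ i₁) p := rfl

theorem isUnit_evalGenericPoint (h : i₀ ≠ i₁) :
    IsUnit (evalGenericPoint h (π (X (some i₀)))) := by
  rw [evalGenericPoint_mk, aeval_X]
  simp only [genericPoint, Option.elim, Function.update_self]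
  have hinj := IsFractionRing.injective T K
  exact (div_ne_zero ((map_ne_zero_iff _ hinj).mpr numPoly_ne_zero)
    ((map_ne_zero_iff _ hinj).mpr denPoly_ne_zero)).isUnit

variable (k i₀ i₁) in
noncomputable def paramAway : T →ₐ[k] L :=
  aeval <| Function.update (Function.update (fun i => algebraMap _ L (π (X (some i)))) i₁
    (IsLocalization.mk' L (π (X (some i₁))) ⟨π (X (some i₀)), Submonoid.mem_powers _⟩)) i₀
    (algebraMap _ L (π (X none)))

noncomputable def evalGenericPointAway (h : i₀ ≠ i₁) : L →ₐ[k] K :=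
  IsLocalization.Away.liftAlgHom _ (isUnit_evalGenericPoint h)

theorem evalGenericPointAway_comp_paramAway (h : i₀ ≠ i₁) :
    (evalGenericPointAway h).comp (paramAway k i₀ i₁) = IsScalarTower.toAlgHom k T K := by
  ext i
  rcases eq_or_ne i i₀ with rfl | h₀
  · simp [paramAway, evalGenericPointAway, evalGenericPoint_mk, genericPoint]
  rcases eq_or_ne i i₁ with rfl | h₁
  · simp only [paramAway, evalGenericPointAway, AlgHom.comp_apply, aeval_X,
      Function.update_of_ne h₀, Function.update_self, IsLocalization.Away.coe_liftAlgHom]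
    refine (IsLocalization.lift_mk'_spec _ _ _ _).mpr ?_
    simp [evalGenericPoint_mk, genericPoint, h₀, mul_comm]
  · simp [paramAway, evalGenericPointAway, evalGenericPoint_mk, genericPoint, h₀, h₁]

theorem paramAway_injective (h : i₀ ≠ i₁) : Function.Injective (paramAway k i₀ i₁) := by
  refine Function.Injective.of_comp (f := evalGenericPointAway h) ?_
  rw [← AlgHom.coe_comp, evalGenericPointAway_comp_paramAway]
  exact IsFractionRing.injective T K

theorem mk_X_ne_zero (h : i₀ ≠ i₁) : π (X (some i₀)) ≠ 0 := by
  rw [Ne, Ideal.Quotient.eq_zero_iff_mem, Ideal.mem_span_singleton]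
  rintro ⟨q, hq⟩
  have := congrArg (aeval fun o : Option ι => if o = some i₀ ∨ o = some i₁ then (-1 : k) else 1) hq
  rw [map_mul, aeval_hyperPoly h] at this
  simp at this

theorem algebraMap_mk (p : MvPolynomial (Option ι) k) :
    algebraMap (CoordRing k i₁) (FractionRing (CoordRing k i₁)) (π p) =
      algebraMap (MvPolynomial (Option ι) k) (FractionRing (CoordRing k i₁)) p := by
  rw [IsScalarTower.algebraMap_apply (MvPolynomial (Option ι) k) (CoordRing k i₁),
    Ideal.Quotient.algebraMap_eq]

end GenericPoint

section FractionField

variable [Nontrivial ι] {i₀ i₁ : ι}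

local notation "T" => MvPolynomial ι k
local notation "K" => FractionRing (MvPolynomial ι k)
local notation "R" => MvPolynomial (Option ι) k
local notation "Q" => CoordRing k i₁
local notation "FQ" => FractionRing (CoordRing k i₁)
local notation "π" => Ideal.Quotient.mk (Ideal.span {(hyperPoly i₁ : MvPolynomial (Option ι) k)})
local notation "L" => Localization.Away (π (X (some i₀)))

theorem isUnit_algebraMap_mk_X (h : i₀ ≠ i₁) : IsUnit (algebraMap Q FQ (π (X (some i₀)))) :=
  (IsFractionRing.to_map_ne_zero_of_mem_nonZeroDivisors
    (mem_nonZeroDivisors_of_ne_zero (mk_X_ne_zero h))).isUnit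

variable (k) in
noncomputable def awayToFractionRing (h : i₀ ≠ i₁) : L →ₐ[k] FQ :=
  IsLocalization.Away.liftAlgHom (f := IsScalarTower.toAlgHom k Q FQ) _ (isUnit_algebraMap_mk_X h)

theorem awayToFractionRing_injective (h : i₀ ≠ i₁) :
    Function.Injective (awayToFractionRing k h) :=
  (IsLocalization.lift_injective_iff _).mpr fun _ _ =>
    (IsLocalization.injective L
      (powers_le_nonZeroDivisors_of_noZeroDivisors (mk_X_ne_zero h))).eq_iff.trans
      (IsFractionRing.injective Q FQ).eq_iff.symm

theorem awayToFractionRing_algebraMap (h : i₀ ≠ i₁) (q : Q) :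
    awayToFractionRing k h (algebraMap Q L q) = algebraMap Q FQ q :=
  IsLocalization.Away.lift_eq _ (isUnit_algebraMap_mk_X h) q

variable (k) in
noncomputable def param (h : i₀ ≠ i₁) : T →ₐ[k] FQ :=
  (awayToFractionRing k h).comp (paramAway k i₀ i₁)

theorem param_injective (h : i₀ ≠ i₁) : Function.Injective (param k h) :=
  (awayToFractionRing_injective h).comp (paramAway_injective h)

theorem param_X_self (h : i₀ ≠ i₁) : param k h (X i₀) = algebraMap R FQ (X none) := by
  simp only [param, paramAway, AlgHom.comp_apply, aeval_X, Function.update_self]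
  rw [awayToFractionRing_algebraMap, algebraMap_mk]

theorem param_X_of_ne (h : i₀ ≠ i₁) {i : ι} (h₀ : i ≠ i₀) (h₁ : i ≠ i₁) :
    param k h (X i) = algebraMap R FQ (X (some i)) := by
  simp only [param, paramAway, AlgHom.comp_apply, aeval_X, Function.update_of_ne h₀,
    Function.update_of_ne h₁]
  rw [awayToFractionRing_algebraMap, algebraMap_mk]

theorem algebraMap_X_eq_mul_param (h : i₀ ≠ i₁) :
    algebraMap R FQ (X (some i₁)) = algebraMap R FQ (X (some i₀)) * param k h (X i₁) := by
  simp only [param, paramAway, awayToFractionRing, AlgHom.comp_apply, aeval_X,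
    Function.update_of_ne h.symm, Function.update_self]
  rw [← algebraMap_mk, ← algebraMap_mk]
  exact (IsLocalization.lift_mk'_spec _ _ _ _).mp rfl

theorem algebraMap_X_mul_param_denPoly (h : i₀ ≠ i₁) :
    algebraMap R FQ (X (some i₀)) * param k h (denPoly i₀ i₁) = param k h (numPoly i₀ i₁) := by
  have hy : algebraMap R FQ (X (some i₀)) ≠ 0 := by
    rw [← algebraMap_mk]; exact (isUnit_algebraMap_mk_X h).ne_zero
  have hf : algebraMap R FQ (hyperPoly i₁) = 0 := by
    rw [← algebraMap_mk, Ideal.Quotient.eq_zero_iff_mem.mpr (Ideal.mem_span_singleton_self _),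
      map_zero]
  rw [← IsScalarTower.coe_toAlgHom' k, aeval_unique (IsScalarTower.toAlgHom k R FQ),
    aeval_hyperPoly h, aeval_restProd (param k h) fun i h₀ h₁ => by
      simp [param_X_of_ne h h₀ h₁]] at hf
  simp only [Function.comp_apply, IsScalarTower.coe_toAlgHom', algebraMap_X_eq_mul_param h,
    ← param_X_self h] at hf
  simp only [numPoly, denPoly, map_sub, map_mul, map_pow]
  refine mul_left_cancel₀ hy ?_
  linear_combination hf

variable (k) in
noncomputable def liftParam (h : i₀ ≠ i₁) : K →ₐ[k] FQ :=
  IsFractionRing.liftAlgHom (param_injective h)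

theorem algebraMap_mem_fieldRange_liftParam (h : i₀ ≠ i₁) (p : R) :
    algebraMap R FQ p ∈ (liftParam k h).fieldRange := by
  set F := (liftParam k h).fieldRange
  have hparam (q : T) : param k h q ∈ F :=
    ⟨algebraMap T K q, IsFractionRing.lift_algebraMap (param_injective h) q⟩
  have hy₀ : algebraMap R FQ (X (some i₀)) ∈ F := by
    rw [eq_div_of_mul_eq ((map_ne_zero_iff _ (param_injective h)).mpr denPoly_ne_zero)
      (algebraMap_X_mul_param_denPoly h)]
    exact div_mem (hparam _) (hparam _)
  have hX (o : Option ι) : algebraMap R FQ (X o) ∈ F := by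
    rcases o with _ | i
    · rw [← param_X_self h]; exact hparam _
    rcases eq_or_ne i i₀ with rfl | h₀
    · exact hy₀
    rcases eq_or_ne i i₁ with rfl | h₁
    · rw [algebraMap_X_eq_mul_param h]; exact mul_mem hy₀ (hparam _)
    · rw [← param_X_of_ne h h₀ h₁]; exact hparam _
  induction p using MvPolynomial.induction_on with
  | C c =>
    rw [← MvPolynomial.algebraMap_eq, ← IsScalarTower.algebraMap_apply]
    exact algebraMap_mem F c
  | add p q hp hq => simpa using add_mem hp hq
  | mul_X p o hp => simpa using mul_mem hp (hX o)

theorem liftParam_surjective (h : i₀ ≠ i₁) : Function.Surjective (liftParam k h) := by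
  intro x
  obtain ⟨a, b, -, rfl⟩ := IsFractionRing.div_surjective (A := Q) x
  obtain ⟨p, rfl⟩ := Ideal.Quotient.mk_surjective a
  obtain ⟨q, rfl⟩ := Ideal.Quotient.mk_surjective b
  rw [algebraMap_mk, algebraMap_mk]
  exact div_mem (algebraMap_mem_fieldRange_liftParam h p) (algebraMap_mem_fieldRange_liftParam h q)

variable (k) in
noncomputable def fractionRingEquiv (h : i₀ ≠ i₁) : FQ ≃ₐ[k] K :=
  (AlgEquiv.ofBijective (liftParam k h)
    ⟨(liftParam k h).toRingHom.injective, liftParam_surjective h⟩).symm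

end FractionField

end Hypersurface

/-- for `n ≥ 2` and
`f = (y₁² + y₁)⋯(y_{n-1}² + y_{n-1}) - z³(yₙ² + yₙ) ∈ ℂ[y₁,…,yₙ,z]`
(the variable `some i` is `yᵢ` and `none` is `z`), the quotient ring
`ℂ[y₁,…,yₙ,z]/(f)` is an integral domain whose field of fractions is isomorphic as a
`ℂ`-algebra to the rational function field `ℂ(t₁,…,tₙ)`. -/
theorem stmt_9 (n : ℕ) (hn : 2 ≤ n)
    (f : MvPolynomial (Option (Fin n)) ℂ)
    (hf : f = (∏ i ∈ Finset.univ.erase (⟨n - 1, by omega⟩ : Fin n),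
          ((X (some i) : MvPolynomial (Option (Fin n)) ℂ) ^ 2 + X (some i))) -
        X none ^ 3 *
          ((X (some ⟨n - 1, by omega⟩) : MvPolynomial (Option (Fin n)) ℂ) ^ 2 +
            X (some ⟨n - 1, by omega⟩))) :
    IsDomain (MvPolynomial (Option (Fin n)) ℂ ⧸ Ideal.span {f}) ∧
      Nonempty ((FractionRing (MvPolynomial (Option (Fin n)) ℂ ⧸ Ideal.span {f})) ≃ₐ[ℂ]
        FractionRing (MvPolynomial (Fin n) ℂ)) := by
  have h : (⟨0, by omega⟩ : Fin n) ≠ ⟨n - 1, by omega⟩ := by simp [Fin.ext_iff]; omega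
  have : Nontrivial (Fin n) := nontrivial_of_ne _ _ h
  subst hf
  exact ⟨inferInstanceAs (IsDomain (Hypersurface.CoordRing ℂ _)),
    ⟨Hypersurface.fractionRingEquiv ℂ h⟩⟩
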